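/- arXiv:1311.0614 — 3 statements merged into one kernel-verified Lean document; each statement's English description precedes it below -/
import Mathlib

section
/- For any continuous map T of a compact metric space X, the set W(T) of weakly almost periodic points has full measure for every T-invariant Borel probability measure. -/
open MeasureTheory Filter Set Metric Topology NNReal ENNReal

noncomputable section

variable {X : Type*} [MetricSpace X] [CompactSpace X] [MeasurableSpace X] [BorelSpace X]

/-- Bowen dynamical ball of order `m` and radius `ε`. -/
def bowenBall (T : X → X) (x : X) (m : ℕ) (ε : ℝ) : Set X :=
  {y | ∀ j < m, dist (T^[j] x) (T^[j] y) ≤ ε}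

/-- Weight `2 ^ (-t·m)` of an entry of a Bowen cover (`none` entries weigh `0`). -/
def bowenWeight (t : ℝ≥0) (c : Option (X × ℕ)) : ℝ≥0∞ :=
  c.elim 0 fun p => (2 : ℝ≥0∞) ^ (-((t : ℝ) * (p.2 : ℝ)))

/-- A finite or countable cover of `E` by Bowen balls of order at least `n`. -/
def IsBowenCover (T : X → X) (E : Set X) (n : ℕ) (ε : ℝ)
    (c : ℕ → Option (X × ℕ)) : Prop :=
  (∀ i p, c i = some p → n ≤ p.2) ∧
    E ⊆ ⋃ i, (c i).elim ∅ fun p => bowenBall T p.1 p.2 ε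

/-- The quantity `C(E; t, n, ε)` of Bowen. -/
def bowenC (T : X → X) (E : Set X) (t : ℝ≥0) (n : ℕ) (ε : ℝ) : ℝ≥0∞ :=
  ⨅ (c : ℕ → Option (X × ℕ)) (_ : IsBowenCover T E n ε c), ∑' i, bowenWeight t (c i)

/-- Bowen entropy of `E` at scale `ε`: the critical exponent `t` at which
`C(E; t, ε) = lim_n C(E; t, n, ε)` vanishes. -/
def bowenEntropyOf (T : X → X) (E : Set X) (ε : ℝ) : ℝ≥0∞ :=
  ⨅ t : {t : ℝ≥0 // ⨆ n, bowenC T E t n ε = 0}, (t.1 : ℝ≥0∞)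

/-- Bowen (dimension-like) topological entropy of an arbitrary subset `E ⊆ X`.
For `E = univ` this is the topological entropy of `T`. -/
def bowenEntropy (T : X → X) (E : Set X) : ℝ≥0∞ :=
  ⨆ (ε : ℝ) (_ : 0 < ε), bowenEntropyOf T E ε

/-- Birkhoff average `(1/n) ∑_{i<n} φ(T^i x)`. -/
def birkhoffAvg (T : X → X) (φ : X → ℝ) (x : X) (n : ℕ) : ℝ :=
  (∑ i ∈ Finset.range n, φ (T^[i] x)) / n

/-- `x` is a generic point for `μ`: the empirical measures `Υ_n(x)` converge to `μ`
in the weak* topology, i.e. Birkhoff averages of every continuous function converge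
to the corresponding integral. -/
def genericFor (T : X → X) (x : X) (μ : Measure X) : Prop :=
  ∀ φ : X → ℝ, Continuous φ →
    Tendsto (fun n => birkhoffAvg T φ x n) atTop (𝓝 (∫ y, φ y ∂μ))

/-- `ρ` is a weak* limit point of the sequence of empirical measures of `x`,
i.e. `ρ ∈ M_x(T)`. -/
def limitMeasure (T : X → X) (x : X) (ρ : Measure X) : Prop :=
  ∃ n : ℕ → ℕ, StrictMono n ∧ ∀ φ : X → ℝ, Continuous φ →
    Tendsto (fun k => birkhoffAvg T φ x (n k)) atTop (𝓝 (∫ y, φ y ∂ρ))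

/-- The (topological) support of a measure on a metric space. -/
def measSupport (μ : Measure X) : Set X := {x | ∀ ε > 0, 0 < μ (Metric.ball x ε)}

/-- Lower visit frequency of the orbit of `x` in the set `E`. -/
def visitLiminf (T : X → X) (x : X) (E : Set X) : ℝ :=
  Filter.atTop.liminf fun n =>
    (∑ i ∈ Finset.range n, E.indicator (fun _ => (1 : ℝ)) (T^[i] x)) / n

/-- Upper visit frequency of the orbit of `x` in the set `E`. -/
def visitLimsup (T : X → X) (x : X) (E : Set X) : ℝ :=
  Filter.atTop.limsup fun n =>
    (∑ i ∈ Finset.range n, E.indicator (fun _ => (1 : ℝ)) (T^[i] x)) / n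

/-- Weakly almost periodic points `W(T)`. -/
def weaklyAlmostPeriodicPts (T : X → X) : Set X :=
  {x | ∀ ε > 0, 0 < visitLiminf T x (Metric.ball x ε)}

/-- Quasi-weakly almost periodic points `QW(T)`. -/
def quasiWeaklyAlmostPeriodicPts (T : X → X) : Set X :=
  {x | ∀ ε > 0, 0 < visitLimsup T x (Metric.ball x ε)}

/-- Recurrent points: `x ∈ ω_T(x)`. -/
def recurrentPts (T : X → X) : Set X :=
  {x | ∀ ε > 0, ∃ n ≥ 1, dist (T^[n] x) x < ε}

/-- Quasiregular points `QR(T)`: points generic for some invariant Borel probability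
measure. -/
def quasiRegularPts (T : X → X) : Set X :=
  {x | ∃ μ : Measure X, IsProbabilityMeasure μ ∧ μ.map T = μ ∧ genericFor T x μ}

/-- A (compact) minimal set: nonempty, closed, invariant, and every orbit in it is
dense in it. -/
def IsMinimalSet (T : X → X) (K : Set X) : Prop :=
  K.Nonempty ∧ IsClosed K ∧ Set.MapsTo T K K ∧
    ∀ y ∈ K, closure (Set.range fun n => T^[n] y) = K

/-- Almost periodic points `A(T)`: points lying in a compact minimal invariant set. -/
def almostPeriodicPts (T : X → X) : Set X :=
  {x | ∃ K, IsMinimalSet T K ∧ x ∈ K}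

/-- Entropy `H(μ, ⋁_{k<n} T^{-k}ξ)` of the `n`-th dynamical refinement of the finite
partition coded by `p`. -/
def partitionDynEntropy (T : X → X) (μ : Measure X) (p : X → ℕ) (n : ℕ) : ℝ≥0∞ :=
  ∑' f : Fin n → ℕ,
    ENNReal.ofReal (Real.negMulLog ((μ {x | ∀ k : Fin n, p (T^[(k : ℕ)] x) = f k}).toReal))

/-- Kolmogorov–Sinai (metric) entropy of `μ`: supremum over finite measurable
partitions of the exponential growth rate of the refined partition entropies. -/
def metricEntropy (T : X → X) (μ : Measure X) : ℝ≥0∞ :=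
  ⨆ p : {p : X → ℕ // Measurable p ∧ (Set.range p).Finite},
    Filter.atTop.limsup fun n => partitionDynEntropy T μ p.1 n / (n : ℝ≥0∞)

/-- The periodic measure: uniform measure on the (periodic) orbit segment of length
`n` of `x`. -/
def periodicOrbitMeasure (T : X → X) (x : X) (n : ℕ) : Measure X :=
  (n : ℝ≥0∞)⁻¹ • ∑ i ∈ Finset.range n, Measure.dirac (T^[i] x)

/-- Regular points `R(T) = ⋃_{μ ergodic} (G_μ ∩ supp μ)`. -/
def regularPts (T : X → X) : Set X :=
  {x | ∃ μ : Measure X, IsProbabilityMeasure μ ∧ Ergodic T μ ∧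
    genericFor T x μ ∧ x ∈ measSupport μ}

/-- The set of integrals `∫ φ dμ` over all invariant Borel probability measures;
its infimum and supremum are the endpoints of the interval `L_φ`. -/
def invIntegralSet (T : X → X) (φ : X → ℝ) : Set ℝ :=
  {r | ∃ μ : Measure X, IsProbabilityMeasure μ ∧ μ.map T = μ ∧ (∫ y, φ y ∂μ) = r}

/-- The entropy spectrum `Ψ(a) = sup {h_ρ(T) : ρ invariant, ∫φ dρ = a}`. -/
def entSpectrum (T : X → X) (φ : X → ℝ) (a : ℝ) : ℝ≥0∞ :=
  ⨆ (ρ : Measure X) (_ : IsProbabilityMeasure ρ ∧ ρ.map T = ρ ∧ (∫ y, φ y ∂ρ) = a),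
    metricEntropy T ρ

/-! The maximal ergodic theorem applied to `δ - 1_B` shows that the points of `B` whose orbit
visits `B` with frequency below `δ` at some time have measure at most `δ`. Letting `δ → 0`,
almost every point of `B` visits `B` with positive lower frequency. Running `B` through a
countable basis of the topology, almost every `x` visits each of its neighbourhoods with positive
lower frequency. -/

section MaxBirkhoffSum

variable {α : Type*} {T : α → α} {f : α → ℝ}

def maxBirkhoffSum (T : α → α) (f : α → ℝ) (N : ℕ) : α → ℝ :=
  (Finset.range (N + 1)).sup' Finset.nonempty_range_add_one (birkhoffSum T f)

lemma birkhoffSum_le_maxBirkhoffSum {k N : ℕ} (hk : k ≤ N) (x : α) :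
    birkhoffSum T f k x ≤ maxBirkhoffSum T f N x := by
  rw [maxBirkhoffSum, Finset.sup'_apply]
  exact Finset.le_sup' (fun k => birkhoffSum T f k x) (Finset.mem_range_succ_iff.2 hk)

lemma maxBirkhoffSum_nonneg (N : ℕ) (x : α) : 0 ≤ maxBirkhoffSum T f N x :=
  (birkhoffSum_zero T f x).symm.trans_le (birkhoffSum_le_maxBirkhoffSum N.zero_le x)

lemma maxBirkhoffSum_mono (x : α) : Monotone fun N => maxBirkhoffSum T f N x := by
  intro M N hMN
  simp only [maxBirkhoffSum, Finset.sup'_apply]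
  exact Finset.sup'_mono _ (Finset.range_subset_range.2 (by omega)) _

lemma exists_birkhoffSum_eq_maxBirkhoffSum (N : ℕ) (x : α) :
    ∃ k ≤ N, maxBirkhoffSum T f N x = birkhoffSum T f k x := by
  simp only [maxBirkhoffSum, Finset.sup'_apply]
  obtain ⟨k, hk, heq⟩ := Finset.exists_mem_eq_sup' Finset.nonempty_range_add_one
    (fun k => birkhoffSum T f k x)
  exact ⟨k, Finset.mem_range_succ_iff.1 hk, heq⟩

/-- Where the running maximum is positive it is attained at some `k ≥ 1`, and
`S_k x = f x + S_{k-1} (T x)`. -/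
lemma maxBirkhoffSum_le_add_maxBirkhoffSum_apply {N : ℕ} {x : α}
    (hx : 0 < maxBirkhoffSum T f N x) :
    maxBirkhoffSum T f N x ≤ f x + maxBirkhoffSum T f N (T x) := by
  obtain ⟨k, hkN, heq⟩ := exists_birkhoffSum_eq_maxBirkhoffSum N x
  rcases k with _ | k
  · rw [heq, birkhoffSum_zero] at hx
    exact (lt_irrefl 0 hx).elim
  rw [heq, birkhoffSum_succ']
  gcongr
  exact birkhoffSum_le_maxBirkhoffSum (by omega) _

lemma setOf_exists_birkhoffSum_pos_eq_iUnion :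
    {x | ∃ n, 0 < birkhoffSum T f n x} = ⋃ N, {x | 0 < maxBirkhoffSum T f N x} := by
  ext x
  simp only [Set.mem_iUnion]
  constructor
  · rintro ⟨n, hn⟩
    exact ⟨n, hn.trans_le (birkhoffSum_le_maxBirkhoffSum le_rfl x)⟩
  · rintro ⟨N, hN⟩
    obtain ⟨k, -, heq⟩ := exists_birkhoffSum_eq_maxBirkhoffSum (T := T) (f := f) N x
    exact ⟨k, heq ▸ hN⟩

end MaxBirkhoffSum

section MaximalErgodic

variable {α : Type*} [MeasurableSpace α] {μ : Measure α} {T : α → α} {f : α → ℝ}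

lemma measurable_birkhoffSum (hT : Measurable T) (hf : Measurable f) (n : ℕ) :
    Measurable (birkhoffSum T f n) :=
  Finset.measurable_sum _ fun i _ => hf.comp (hT.iterate i)

lemma measurable_maxBirkhoffSum (hT : Measurable T) (hf : Measurable f) (N : ℕ) :
    Measurable (maxBirkhoffSum T f N) :=
  Finset.measurable_sup' _ fun k _ => measurable_birkhoffSum hT hf k

lemma MeasureTheory.MeasurePreserving.integrable_birkhoffSum (hT : MeasurePreserving T μ μ)
    (hf : Integrable f μ) (n : ℕ) : Integrable (birkhoffSum T f n) μ :=
  integrable_finsetSum _ fun i _ => (hT.iterate i).integrable_comp_of_integrable hf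

lemma MeasureTheory.MeasurePreserving.integrable_maxBirkhoffSum (hT : MeasurePreserving T μ μ)
    (hf : Integrable f μ) (N : ℕ) : Integrable (maxBirkhoffSum T f N) μ :=
  Finset.sup'_induction (p := (Integrable · μ)) _ _ (fun _ h₁ _ h₂ => h₁.sup h₂)
    fun k _ => hT.integrable_birkhoffSum hf k

/-- Garsia's proof: on `{M_N > 0}`, `f ≥ M_N - M_N ∘ T`, and integrating `M_N - M_N ∘ T` over
that set gives at least `∫ M_N - ∫ M_N ∘ T = 0`. -/
lemma MeasureTheory.MeasurePreserving.setIntegral_setOf_maxBirkhoffSum_pos_nonneg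
    (hT : MeasurePreserving T μ μ) (hfm : Measurable f) (hf : Integrable f μ) (N : ℕ) :
    0 ≤ ∫ x in {x | 0 < maxBirkhoffSum T f N x}, f x ∂μ := by
  set M := maxBirkhoffSum T f N
  set A := {x | 0 < M x}
  have hMm : Measurable M := measurable_maxBirkhoffSum hT.measurable hfm N
  have hM : Integrable M μ := hT.integrable_maxBirkhoffSum hf N
  have hMT : Integrable (fun x => M (T x)) μ := hT.integrable_comp_of_integrable hM
  have hMT_eq : ∫ x, M (T x) ∂μ = ∫ x, M x ∂μ := by
    conv_rhs => rw [← hT.map_eq]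
    exact (integral_map hT.measurable.aemeasurable hMm.aestronglyMeasurable).symm
  have hMA : ∫ x in A, M x ∂μ = ∫ x, M x ∂μ :=
    setIntegral_eq_integral_of_forall_compl_eq_zero fun x hx =>
      le_antisymm (not_lt.1 hx) (maxBirkhoffSum_nonneg N x)
  have hMTA : ∫ x in A, M (T x) ∂μ ≤ ∫ x, M (T x) ∂μ :=
    setIntegral_le_integral hMT (ae_of_all _ fun x => maxBirkhoffSum_nonneg N (T x))
  have hmono : ∫ x in A, (M x - M (T x)) ∂μ ≤ ∫ x in A, f x ∂μ :=
    setIntegral_mono_on (hM.sub hMT).integrableOn hf.integrableOn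
      (measurableSet_lt measurable_const hMm) fun x hx => by
        linarith [maxBirkhoffSum_le_add_maxBirkhoffSum_apply hx]
  rw [integral_sub hM.integrableOn hMT.integrableOn] at hmono
  linarith

theorem MeasureTheory.MeasurePreserving.setIntegral_setOf_exists_birkhoffSum_pos_nonneg
    (hT : MeasurePreserving T μ μ) (hfm : Measurable f) (hf : Integrable f μ) :
    0 ≤ ∫ x in {x | ∃ n, 0 < birkhoffSum T f n x}, f x ∂μ := by
  rw [setOf_exists_birkhoffSum_pos_eq_iUnion]
  refine ge_of_tendsto' (tendsto_setIntegral_of_monotone (fun N => ?_) ?_ hf.integrableOn)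
    (hT.setIntegral_setOf_maxBirkhoffSum_pos_nonneg hfm hf)
  · exact measurableSet_lt measurable_const (measurable_maxBirkhoffSum hT.measurable hfm N)
  · exact fun M N hMN x (hx : 0 < _) => hx.trans_le (maxBirkhoffSum_mono x hMN)

end MaximalErgodic

section VisitFrequency

variable {α : Type*} {T : α → α}

lemma birkhoffSum_indicator_one_nonneg (E : Set α) (n : ℕ) (x : α) :
    0 ≤ birkhoffSum T (E.indicator (1 : α → ℝ)) n x :=
  Finset.sum_nonneg fun _ _ => Set.indicator_nonneg (fun _ _ => zero_le_one) _

lemma birkhoffSum_indicator_one_le (E : Set α) (n : ℕ) (x : α) :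
    birkhoffSum T (E.indicator (1 : α → ℝ)) n x ≤ n := by
  calc birkhoffSum T (E.indicator 1) n x ≤ ∑ _i ∈ Finset.range n, (1 : ℝ) :=
        Finset.sum_le_sum fun _ _ => Set.indicator_le_self' (fun _ _ => zero_le_one) _
    _ = n := by simp

lemma birkhoffSum_indicator_one_div_mem_Icc (E : Set α) (n : ℕ) (x : α) :
    birkhoffSum T (E.indicator (1 : α → ℝ)) n x / n ∈ Icc (0 : ℝ) 1 :=
  ⟨div_nonneg (birkhoffSum_indicator_one_nonneg E n x) n.cast_nonneg,
    div_le_one_of_le₀ (birkhoffSum_indicator_one_le E n x) n.cast_nonneg⟩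

lemma visitLiminf_mono {E F : Set α} (hEF : E ⊆ F) (x : α) :
    visitLiminf T x E ≤ visitLiminf T x F := by
  refine liminf_le_liminf (Eventually.of_forall fun n => ?_)
    (isBoundedUnder_of ⟨0, fun n => (birkhoffSum_indicator_one_div_mem_Icc E n x).1⟩)
    (isBoundedUnder_of ⟨1, fun n =>
      (birkhoffSum_indicator_one_div_mem_Icc F n x).2⟩).isCoboundedUnder_ge
  gcongr

lemma exists_birkhoffSum_indicator_lt_of_visitLiminf_lt {B : Set α} {x : α} {δ : ℝ}
    (h : visitLiminf T x B < δ) : ∃ n : ℕ, birkhoffSum T (B.indicator 1) n x < n * δ := by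
  have hfreq := frequently_lt_of_liminf_lt (isBoundedUnder_of ⟨1, fun n =>
    (birkhoffSum_indicator_one_div_mem_Icc B n x).2⟩).isCoboundedUnder_ge h
  obtain ⟨n, hn, hpos⟩ := (hfreq.and_eventually (eventually_gt_atTop 0)).exists
  exact ⟨n, (div_lt_iff₀' (by exact_mod_cast hpos)).1 hn⟩

variable [MeasurableSpace α] {μ : Measure α}

lemma MeasureTheory.MeasurePreserving.measureReal_setOf_birkhoffSum_indicator_lt_inter_le
    [IsFiniteMeasure μ] (hT : MeasurePreserving T μ μ) {B : Set α} (hB : MeasurableSet B)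
    (δ : ℝ) :
    μ.real ({x | ∃ n : ℕ, birkhoffSum T (B.indicator 1) n x < n * δ} ∩ B) ≤
      δ * μ.real {x | ∃ n : ℕ, birkhoffSum T (B.indicator 1) n x < n * δ} := by
  set A := {x | ∃ n : ℕ, birkhoffSum T (B.indicator 1) n x < n * δ}
  have hA : A = {x | ∃ n, 0 < birkhoffSum T ((fun _ => δ) - B.indicator 1) n x} := by
    have hconst (n : ℕ) (x : α) : birkhoffSum T (fun _ => δ) n x = n * δ := by
      simp [birkhoffSum]
    simp only [A, birkhoffSum_sub, hconst, sub_pos]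
  have hind : Integrable (B.indicator (1 : α → ℝ)) μ := (integrable_const 1).indicator hB
  have hgarsia := hT.setIntegral_setOf_exists_birkhoffSum_pos_nonneg
    (f := (fun _ => δ) - B.indicator 1) (measurable_const.sub (measurable_const.indicator hB))
    ((integrable_const δ).sub hind)
  rw [← hA] at hgarsia
  simp only [Pi.sub_apply] at hgarsia
  rw [integral_sub (integrable_const δ) hind.integrableOn,
    setIntegral_const, integral_indicator_one hB, measureReal_restrict_apply hB] at hgarsia
  rw [inter_comm]
  linarith [smul_eq_mul (μ.real A) δ]

lemma MeasureTheory.MeasurePreserving.measure_inter_setOf_visitLiminf_nonpos [IsFiniteMeasure μ]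
    (hT : MeasurePreserving T μ μ) {B : Set α} (hB : MeasurableSet B) :
    μ (B ∩ {x | visitLiminf T x B ≤ 0}) = 0 := by
  have hle : ∀ δ > 0, μ.real (B ∩ {x | visitLiminf T x B ≤ 0}) ≤ δ * μ.real univ := by
    intro δ hδ
    calc μ.real (B ∩ {x | visitLiminf T x B ≤ 0})
        ≤ μ.real ({x | ∃ n : ℕ, birkhoffSum T (B.indicator 1) n x < n * δ} ∩ B) :=
          measureReal_mono fun x ⟨hxB, hx⟩ =>
            ⟨exists_birkhoffSum_indicator_lt_of_visitLiminf_lt (hx.trans_lt hδ), hxB⟩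
      _ ≤ δ * μ.real {x | ∃ n : ℕ, birkhoffSum T (B.indicator 1) n x < n * δ} :=
          hT.measureReal_setOf_birkhoffSum_indicator_lt_inter_le hB δ
      _ ≤ δ * μ.real univ := by gcongr; exacts [measure_ne_top μ univ, subset_univ _]
  have hlim : Tendsto (fun δ : ℝ => δ * μ.real univ) (𝓝[>] 0) (𝓝 0) := by
    simpa using tendsto_nhdsWithin_of_tendsto_nhds (s := Ioi 0)
      ((continuous_mul_const (μ.real univ)).tendsto 0)
  have hnonpos := ge_of_tendsto hlim (eventually_nhdsWithin_of_forall hle)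
  exact (measureReal_eq_zero_iff).1 (le_antisymm hnonpos measureReal_nonneg)

end VisitFrequency

/-- the set `W(T)` of weakly almost periodic points has full measure
for every invariant Borel probability measure. -/
theorem weaklyAlmostPeriodic_totally_full_measure (T : X → X) (hT : Continuous T)
    (μ : Measure X) (hμ : IsProbabilityMeasure μ) (hinv : μ.map T = μ) :
    μ (weaklyAlmostPeriodicPts T) = 1 := by
  have hTμ : MeasurePreserving T μ μ := ⟨hT.measurable, hinv⟩
  set 𝓑 := TopologicalSpace.countableBasis X
  set N := ⋃ V ∈ 𝓑, V ∩ {x | visitLiminf T x V ≤ 0}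
  have hN : μ N = 0 :=
    (measure_biUnion_null_iff (TopologicalSpace.countable_countableBasis X)).2 fun V hV =>
      hTμ.measure_inter_setOf_visitLiminf_nonpos
        (TopologicalSpace.isOpen_of_mem_countableBasis hV).measurableSet
  have hsub : (weaklyAlmostPeriodicPts T)ᶜ ⊆ N := by
    refine fun x hx => not_not.1 fun hxN => hx fun ε hε => ?_
    obtain ⟨V, hV, hxV, hVε⟩ :=
      (TopologicalSpace.isBasis_countableBasis X).exists_subset_of_mem_open
        (mem_ball_self hε) isOpen_ball
    have hpos : 0 < visitLiminf T x V := not_le.1 fun h => hxN (mem_biUnion hV ⟨hxV, h⟩)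
    exact hpos.trans_le (visitLiminf_mono hVε x)
  refine le_antisymm prob_le_one ?_
  calc 1 = μ univ := measure_univ.symm
    _ ≤ μ (weaklyAlmostPeriodicPts T) :=
      measure_mono_ae (ae_le_set.2 (measure_mono_null (fun x hx => hsub hx.2) hN))

end
end

section
/- For any continuous map T of a compact metric space X, the set QW(T) \ W(T) of quasi-weakly almost periodic points that are not weakly almost periodic is contained in the irregular set I(T) = {x : the empirical measures Υ_n(x) do not converge}. -/
open MeasureTheory Filter Set Metric Topology NNReal ENNReal

noncomputable section

variable {X : Type*} [MetricSpace X] [CompactSpace X] [MeasurableSpace X] [BorelSpace X]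

/-! For a generic point `x` the Birkhoff averages of a Urysohn function `g` with
`𝟙_{ball x (ε / 2)} ≤ g ≤ 𝟙_{ball x ε}` converge, and their limit lies between the upper visit
frequency of the small ball and the lower visit frequency of the large one. So positive upper
visit frequencies force positive lower ones. -/

lemma birkhoffAvg_mono {X : Type*} (T : X → X) {f g : X → ℝ} (h : ∀ y, f y ≤ g y) (x : X)
    (n : ℕ) : birkhoffAvg T f x n ≤ birkhoffAvg T g x n :=
  div_le_div_of_nonneg_right (Finset.sum_le_sum fun _ _ => h _) n.cast_nonneg

lemma birkhoffAvg_indicator_nonneg {X : Type*} (T : X → X) (A : Set X) (x : X) (n : ℕ) :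
    0 ≤ birkhoffAvg T (A.indicator fun _ => 1) x n :=
  div_nonneg (Finset.sum_nonneg fun _ _ => Set.indicator_nonneg (fun _ _ => zero_le_one) _)
    n.cast_nonneg

lemma birkhoffAvg_indicator_le_one {X : Type*} (T : X → X) (A : Set X) (x : X) (n : ℕ) :
    birkhoffAvg T (A.indicator fun _ => 1) x n ≤ 1 := by
  rcases n.eq_zero_or_pos with rfl | hn
  · simp [birkhoffAvg]
  rw [birkhoffAvg, div_le_one (by exact_mod_cast hn)]
  calc ∑ i ∈ Finset.range n, A.indicator (fun _ => (1 : ℝ)) (T^[i] x)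
      ≤ ∑ _i ∈ Finset.range n, (1 : ℝ) :=
        Finset.sum_le_sum fun _ _ => Set.indicator_le_self' (fun _ _ => zero_le_one) _
    _ = n := by simp

lemma visitLimsup_le_of_tendsto {X : Type*} {T : X → X} {x : X} {A : Set X} {g : X → ℝ}
    {L : ℝ} (hg : Tendsto (birkhoffAvg T g x) atTop (𝓝 L))
    (hAg : ∀ y, A.indicator (fun _ => 1) y ≤ g y) : visitLimsup T x A ≤ L := by
  rw [← hg.limsup_eq]
  exact limsup_le_limsup (.of_forall (birkhoffAvg_mono T hAg x))
    (isBoundedUnder_of ⟨0, birkhoffAvg_indicator_nonneg T A x⟩).isCoboundedUnder_le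
    hg.isBoundedUnder_le

lemma le_visitLiminf_of_tendsto {X : Type*} {T : X → X} {x : X} {B : Set X} {g : X → ℝ}
    {L : ℝ} (hg : Tendsto (birkhoffAvg T g x) atTop (𝓝 L))
    (hgB : ∀ y, g y ≤ B.indicator (fun _ => 1) y) : L ≤ visitLiminf T x B := by
  rw [← hg.liminf_eq]
  exact liminf_le_liminf (.of_forall (birkhoffAvg_mono T hgB x)) hg.isBoundedUnder_ge
    (isBoundedUnder_of ⟨1, birkhoffAvg_indicator_le_one T B x⟩).isCoboundedUnder_ge

lemma exists_continuous_indicator_le_le_indicator {X : Type*} [TopologicalSpace X]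
    [NormalSpace X] {A B : Set X} (hAB : closure A ⊆ interior B) :
    ∃ g : X → ℝ, Continuous g ∧ (∀ y, A.indicator (fun _ => 1) y ≤ g y) ∧
      ∀ y, g y ≤ B.indicator (fun _ => 1) y := by
  obtain ⟨g, hg0, hg1, hg01⟩ := exists_continuous_zero_one_of_isClosed
    isOpen_interior.isClosed_compl isClosed_closure
    (disjoint_compl_left_iff_subset.mpr hAB)
  refine ⟨g, g.continuous, fun y => ?_, fun y => ?_⟩
  · by_cases hy : y ∈ A
    · simp [hy, hg1 (subset_closure hy)]
    · simpa [hy] using (hg01 y).1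
  · by_cases hy : y ∈ interior B
    · simpa [interior_subset hy] using (hg01 y).2
    · simp [hg0 hy, Set.indicator_nonneg]

lemma visitLimsup_le_visitLiminf_of_genericFor {X : Type*} [MetricSpace X] [MeasurableSpace X]
    {T : X → X} {x : X} {μ : Measure X} (hx : genericFor T x μ) {A B : Set X}
    (hAB : closure A ⊆ interior B) : visitLimsup T x A ≤ visitLiminf T x B := by
  obtain ⟨g, hg, hAg, hgB⟩ := exists_continuous_indicator_le_le_indicator hAB
  exact (visitLimsup_le_of_tendsto (hx g hg) hAg).trans (le_visitLiminf_of_tendsto (hx g hg) hgB)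

theorem qw_minus_w_subset_irregular_general (T : X → X) :
    quasiWeaklyAlmostPeriodicPts T \ weaklyAlmostPeriodicPts T ⊆
      (quasiRegularPts T)ᶜ := by
  rintro x ⟨hQW, hW⟩ ⟨μ, -, -, hx⟩
  refine hW fun ε hε => (hQW (ε / 2) (half_pos hε)).trans_le
    (visitLimsup_le_visitLiminf_of_genericFor hx ?_)
  calc closure (ball x (ε / 2)) ⊆ closedBall x (ε / 2) := closure_ball_subset_closedBall
    _ ⊆ ball x ε := closedBall_subset_ball (half_lt_self hε)
    _ = interior (ball x ε) := isOpen_ball.interior_eq.symm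

/-- quasi-weakly almost periodic points that are not weakly almost
periodic are irregular: `QW(T) \ W(T) ⊆ I(T)`. -/
theorem qw_minus_w_subset_irregular (T : X → X) (hT : Continuous T) :
    quasiWeaklyAlmostPeriodicPts T \ weaklyAlmostPeriodicPts T ⊆
      (quasiRegularPts T)ᶜ :=
  qw_minus_w_subset_irregular_general T
end
end

section
/- Let T be a continuous map of an infinite compact metric space X such that the periodic points are dense in X and the periodic measures are dense in the space of invariant measures. Then every nonempty open set U ⊆ X contains infinitely many periodic points. -/
open MeasureTheory Filter Set Metric Topology NNReal ENNReal

noncomputable section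

variable {X : Type*} [MetricSpace X] [CompactSpace X] [MeasurableSpace X] [BorelSpace X]

/-!
If `U` contained only finitely many periodic points, the periodic points whose orbit meets `U`
would form a finite closed set `Δ`. Take continuous `φ, ψ ≥ 0` with `φ` supported in `U`,
`φ > 0` at a periodic point of `U`, `ψ = 0` on `Δ` and `ψ > 0` at a periodic point off `Δ`
(there is one since `X` is infinite and periodic points are dense). Averaging the two periodic
orbit measures gives an invariant `ω` with `∫ φ dω * ∫ ψ dω > 0`. But every periodic orbit
either misses `U`, killing `φ`, or lies in `Δ`, killing `ψ`; so this product vanishes along any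
sequence of periodic measures, hence also at their weak* limit `ω`.
-/

open Function

section PeriodicOrbits

variable {α : Type*} {f : α → α} {U : Set α}

-- `periodicOrbit f x` is empty unless `x` is periodic.
def periodicPtsMeeting (f : α → α) (U : Set α) : Set α :=
  {x | ∃ y ∈ periodicOrbit f x, y ∈ U}

theorem iterate_mem_periodicPtsMeeting {x : α} (hx : x ∈ periodicPts f)
    (hU : ∃ i, f^[i] x ∈ U) (j : ℕ) : f^[j] x ∈ periodicPtsMeeting f U := by
  obtain ⟨i, hi⟩ := hU
  refine ⟨f^[i] x, ?_, hi⟩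
  rw [periodicOrbit_apply_iterate_eq hx]
  exact iterate_mem_periodicOrbit hx i

theorem setOf_mem_periodicOrbit_finite (f : α → α) (x : α) :
    {y | y ∈ periodicOrbit f x}.Finite :=
  List.finite_toSet _

theorem periodicPtsMeeting_finite (hU : (U ∩ periodicPts f).Finite) :
    (periodicPtsMeeting f U).Finite := by
  refine (hU.biUnion fun y _ => setOf_mem_periodicOrbit_finite f y).subset ?_
  rintro x ⟨y, hyx, hyU⟩
  have hx : x ∈ periodicPts f := by
    by_contra hx
    rw [periodicOrbit_eq_nil_of_not_periodic_pt hx] at hyx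
    exact Cycle.notMem_nil y hyx
  obtain ⟨n, rfl⟩ := (mem_periodicOrbit_iff hx).mp hyx
  have hy : f^[n] x ∈ periodicPts f :=
    let ⟨m, hm, hxm⟩ := hx
    mk_mem_periodicPts hm (hxm.apply_iterate n)
  refine Set.mem_biUnion ⟨hyU, hy⟩ ?_
  show x ∈ periodicOrbit f (f^[n] x)
  rw [periodicOrbit_apply_iterate_eq hx]
  exact self_mem_periodicOrbit hx

theorem birkhoffSum_apply_of_isPeriodicPt {M : Type*} [AddCommMonoid M] (g : α → M) {n : ℕ}
    {x : α} (hx : IsPeriodicPt f n x) : birkhoffSum f g n (f x) = birkhoffSum f g n x := by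
  cases n with
  | zero => simp only [birkhoffSum_zero]
  | succ m =>
    rw [birkhoffSum_succ, birkhoffSum_succ', ← iterate_succ_apply, hx.eq, add_comm]

end PeriodicOrbits

section PeriodicOrbitMeasure

variable {α : Type*} [MeasurableSpace α] {T : α → α} {x : α} {n : ℕ}

theorem periodicOrbitMeasure_eq_smul_birkhoffSum :
    periodicOrbitMeasure T x n = (n : ℝ≥0∞)⁻¹ • birkhoffSum T Measure.dirac n x :=
  rfl

theorem isProbabilityMeasure_periodicOrbitMeasure (hn : n ≠ 0) :
    IsProbabilityMeasure (periodicOrbitMeasure T x n) := by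
  constructor
  simp [periodicOrbitMeasure, Measure.finsetSum_apply,
    ENNReal.inv_mul_cancel (Nat.cast_ne_zero.mpr hn) (ENNReal.natCast_ne_top n)]

theorem map_birkhoffSum_dirac (hT : Measurable T) :
    (birkhoffSum T Measure.dirac n x).map T = birkhoffSum T Measure.dirac n (T x) := by
  unfold birkhoffSum
  rw [Measure.map_finset_sum hT.aemeasurable]
  simp only [Measure.map_dirac' hT, ← iterate_succ_apply' T, iterate_succ_apply]

theorem map_periodicOrbitMeasure (hT : Measurable T) (hx : IsPeriodicPt T n x) :
    (periodicOrbitMeasure T x n).map T = periodicOrbitMeasure T x n := by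
  rw [periodicOrbitMeasure_eq_smul_birkhoffSum, Measure.map_smul, map_birkhoffSum_dirac hT,
    birkhoffSum_apply_of_isPeriodicPt _ hx]

theorem integral_periodicOrbitMeasure [MeasurableSingletonClass α] (φ : α → ℝ) :
    ∫ y, φ y ∂(periodicOrbitMeasure T x n) = birkhoffAvg T φ x n := by
  rw [periodicOrbitMeasure, integral_smul_measure,
    integral_finsetSum_measure fun i _ => integrable_dirac enorm_lt_top]
  simp [birkhoffAvg, integral_dirac, ENNReal.toReal_inv, div_eq_inv_mul]

theorem integrable_periodicOrbitMeasure [MeasurableSingletonClass α] (hn : n ≠ 0) (φ : α → ℝ) :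
    Integrable φ (periodicOrbitMeasure T x n) :=
  (integrable_finsetSum_measure.mpr fun _ _ => integrable_dirac enorm_lt_top).smul_measure
    (ENNReal.inv_ne_top.mpr (Nat.cast_ne_zero.mpr hn))

theorem integral_periodicOrbitMeasure_pos [MeasurableSingletonClass α] {φ : α → ℝ} (hn : n ≠ 0)
    (hφ : 0 ≤ φ) (hx : 0 < φ x) : 0 < ∫ y, φ y ∂(periodicOrbitMeasure T x n) := by
  rw [integral_periodicOrbitMeasure, birkhoffAvg]
  refine div_pos (Finset.sum_pos' (fun i _ => hφ _) ⟨0, ?_, hx⟩) (by positivity)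
  exact Finset.mem_range.mpr (Nat.pos_of_ne_zero hn)

theorem integral_periodicOrbitMeasure_eq_zero [MeasurableSingletonClass α] {φ : α → ℝ}
    (hφ : ∀ i, φ (T^[i] x) = 0) : ∫ y, φ y ∂(periodicOrbitMeasure T x n) = 0 := by
  rw [integral_periodicOrbitMeasure, birkhoffAvg, Finset.sum_eq_zero fun i _ => hφ i, zero_div]

theorem exists_invariant_integral_pos [MeasurableSingletonClass α] (hT : Measurable T)
    {φ ψ : α → ℝ} (hφ : 0 ≤ φ) (hψ : 0 ≤ ψ) {p z : α} (hp : p ∈ periodicPts T)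
    (hz : z ∈ periodicPts T) (hφp : 0 < φ p) (hψz : 0 < ψ z) :
    ∃ ω : Measure α, IsProbabilityMeasure ω ∧ ω.map T = ω ∧
      0 < ∫ y, φ y ∂ω ∧ 0 < ∫ y, ψ y ∂ω := by
  obtain ⟨m, hm, hpm⟩ := hp
  obtain ⟨k, hk, hzk⟩ := hz
  set μ := periodicOrbitMeasure T p m
  set ν := periodicOrbitMeasure T z k
  have : IsProbabilityMeasure μ := isProbabilityMeasure_periodicOrbitMeasure hm.ne'
  have : IsProbabilityMeasure ν := isProbabilityMeasure_periodicOrbitMeasure hk.ne'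
  have hω (g : α → ℝ) : ∫ y, g y ∂((2 : ℝ≥0∞)⁻¹ • (μ + ν)) =
      2⁻¹ * (∫ y, g y ∂μ + ∫ y, g y ∂ν) := by
    rw [integral_smul_measure, integral_add_measure (integrable_periodicOrbitMeasure hm.ne' g)
      (integrable_periodicOrbitMeasure hk.ne' g), ENNReal.toReal_inv, ENNReal.toReal_ofNat,
      smul_eq_mul]
  refine ⟨(2 : ℝ≥0∞)⁻¹ • (μ + ν), ⟨?_⟩, ?_, ?_, ?_⟩
  · simp [ENNReal.inv_two_add_inv_two]
  · rw [Measure.map_smul, Measure.map_add _ _ hT, map_periodicOrbitMeasure hT hpm,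
      map_periodicOrbitMeasure hT hzk]
  · rw [hω]
    have := integral_periodicOrbitMeasure_pos (T := T) hm.ne' hφ hφp
    have := integral_nonneg (μ := ν) hφ
    positivity
  · rw [hω]
    have := integral_nonneg (μ := μ) hψ
    have := integral_periodicOrbitMeasure_pos (T := T) hk.ne' hψ hψz
    positivity

end PeriodicOrbitMeasure

/-- if `X` is infinite, the periodic points are dense and the periodic
measures are weak*-dense in the invariant measures, then every nonempty open set
contains infinitely many periodic points. -/
theorem infinite_periodicPts_in_open (T : X → X) (hT : Continuous T) [Infinite X]
    (hper : Dense (Function.periodicPts T))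
    (hdense : ∀ μ : Measure X, IsProbabilityMeasure μ → μ.map T = μ →
      ∃ (x : ℕ → X) (n : ℕ → ℕ), (∀ k, 1 ≤ n k ∧ T^[n k] (x k) = x k) ∧
        ∀ φ : X → ℝ, Continuous φ →
          Tendsto (fun k => ∫ y, φ y ∂(periodicOrbitMeasure T (x k) (n k))) atTop
            (𝓝 (∫ y, φ y ∂μ))) :
    ∀ U : Set X, IsOpen U → U.Nonempty →
      (U ∩ Function.periodicPts T).Infinite := by
  intro U hU hUne
  by_contra hfin
  have hΔ := periodicPtsMeeting_finite (Set.not_infinite.mp hfin)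
  obtain ⟨p, hp, hpU⟩ := hper.exists_mem_open hU hUne
  obtain ⟨z, hz, hzΔ⟩ :=
    hper.exists_mem_open hΔ.isClosed.isOpen_compl hΔ.infinite_compl.nonempty
  obtain ⟨φ, hφU, hφp, hφ01⟩ := exists_continuous_zero_one_of_isClosed hU.isClosed_compl
    isClosed_singleton (Set.disjoint_singleton_right.mpr (not_not_intro hpU))
  obtain ⟨ψ, hψΔ, hψz, hψ01⟩ := exists_continuous_zero_one_of_isClosed hΔ.isClosed
    isClosed_singleton (Set.disjoint_singleton_right.mpr hzΔ)
  obtain ⟨ω, hωprob, hωinv, hφω, hψω⟩ := exists_invariant_integral_pos hT.measurable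
    (fun y => (hφ01 y).1) (fun y => (hψ01 y).1) hp hz (by simp [hφp rfl]) (by simp [hψz rfl])
  obtain ⟨x, n, hxn, hconv⟩ := hdense ω hωprob hωinv
  have hvanish (k : ℕ) : (∫ y, φ y ∂(periodicOrbitMeasure T (x k) (n k))) *
      ∫ y, ψ y ∂(periodicOrbitMeasure T (x k) (n k)) = 0 := by
    by_cases hk : ∃ i, T^[i] (x k) ∈ U
    · have hxk : x k ∈ periodicPts T := mk_mem_periodicPts (hxn k).1 (hxn k).2
      exact mul_eq_zero_of_right _ (integral_periodicOrbitMeasure_eq_zero fun i =>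
        hψΔ (iterate_mem_periodicPtsMeeting hxk hk i))
    · exact mul_eq_zero_of_left (integral_periodicOrbitMeasure_eq_zero fun i =>
        hφU (not_exists.mp hk i)) _
  have hlim := ((hconv φ φ.continuous).mul (hconv ψ ψ.continuous)).congr hvanish
  exact (mul_pos hφω hψω).ne' (tendsto_nhds_unique hlim tendsto_const_nhds)
end
end
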